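/- arXiv:1305.0579 — 5 statements merged into one kernel-verified Lean document; each statement's English description precedes it below -/
import Mathlib

section
/- Let λ, a₀, b₀, x₀ be real numbers with |λ| > 1, b₀ ≠ 0, x₀ ≠ 0, and suppose a₀ + λᵏ b₀ ≠ 0 for every integer k ≥ 0. Define xₙ = (λ^(n(n-1)/2) b₀ⁿ / n!) · x₀ · ∏_{k=0}^{n-1} (1 + a₀/(λᵏ b₀)). Then |xₙ|^{1/n} → ∞ as n → ∞; in particular the power series Σ xₙ tⁿ has zero radius of convergence. -/
/-!
The series `∑ |a₀ / (λᵏ b₀)|` is geometric and no factor `1 + a₀ / (λᵏ b₀)` vanishes, so the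
partial products converge to a nonzero limit; hence `|x₀ ∏ₖ (1 + a₀ / (λᵏ b₀))| ≥ c > 0` for
large `n`. With `s = √|λ|` we have `|λ|^(n(n-1)/2) = (s^(n-1))ⁿ`, and `n! ≤ nⁿ`, so
`|xₙ| ≥ (s^(n-1) |b₀| min c 1 / n)ⁿ`, whose base tends to infinity because `s > 1`.
-/

open Filter Finset

theorem exists_pos_eventually_le_norm_prod_range_one_add {R : Type*} [NormedCommRing R]
    [NormOneClass R] [CompleteSpace R] [NormMulClass R] {f : ℕ → R}
    (hf : ∀ k, 1 + f k ≠ 0) (hs : Summable fun k => ‖f k‖) :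
    ∃ c > 0, ∀ᶠ n in atTop, c ≤ ‖∏ k ∈ range n, (1 + f k)‖ := by
  have hP : 0 < ‖∏' k, (1 + f k)‖ :=
    norm_pos_iff.mpr (tprod_one_add_ne_zero_of_summable hf hs)
  have hlim := (multipliable_one_add_of_summable hs).tendsto_prod_tprod_nat.norm
  exact ⟨_, half_pos hP,
    (hlim.eventually (lt_mem_nhds (half_lt_self hP))).mono fun _ => le_of_lt⟩

theorem summable_abs_div_pow_mul {lam : ℝ} (hlam : 1 < |lam|) (a b : ℝ) :
    Summable fun k : ℕ => |a / (lam ^ k * b)| := by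
  have hgeo := summable_geometric_of_lt_one (by positivity) (inv_lt_one_of_one_lt₀ hlam)
  refine (hgeo.mul_left (|a| / |b|)).congr fun k => ?_
  rw [abs_div, abs_mul, abs_pow, inv_pow]
  ring

theorem tendsto_pow_pred_div_natCast_atTop {s : ℝ} (hs : 1 < s) :
    Tendsto (fun n : ℕ => s ^ (n - 1) / n) atTop atTop := by
  have hinv : Tendsto (fun n : ℕ => (n : ℝ) ^ 1 / s ^ n) atTop (nhdsWithin 0 (Set.Ioi 0)) :=
    tendsto_nhdsWithin_iff.mpr ⟨tendsto_pow_const_div_const_pow_of_one_lt 1 hs,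
      (eventually_ge_atTop 1).mono fun n hn => by simp only [Set.mem_Ioi]; positivity⟩
  refine (hinv.inv_tendsto_nhdsGT_zero.atTop_mul_const (inv_pos.mpr (by linarith))).congr' ?_
  filter_upwards [eventually_ge_atTop 1] with n hn
  simp only [Pi.inv_apply, inv_div, pow_one, pow_sub₀ s (by positivity) hn]
  ring

theorem pow_two_pow_mul_pred_div_two {M : Type*} [Monoid M] (x : M) (n : ℕ) :
    (x ^ 2) ^ (n * (n - 1) / 2) = (x ^ (n - 1)) ^ n := by
  rw [← pow_mul, ← pow_mul, Nat.two_mul_div_two_of_even (Nat.even_mul_pred_self n), mul_comm]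

theorem sqrt_pow_pred_div_mul_pow_le_abs_div_factorial (lam b : ℝ) (n : ℕ) :
    (√|lam| ^ (n - 1) / n * |b|) ^ n ≤ |lam ^ (n * (n - 1) / 2) * b ^ n / n.factorial| := by
  have hpow : |lam| ^ (n * (n - 1) / 2) = (√|lam| ^ (n - 1)) ^ n := by
    rw [← pow_two_pow_mul_pred_div_two, Real.sq_sqrt (abs_nonneg lam)]
  calc (√|lam| ^ (n - 1) / n * |b|) ^ n = (√|lam| ^ (n - 1)) ^ n * |b| ^ n / (n : ℝ) ^ n := by
        rw [div_mul_eq_mul_div, div_pow, mul_pow]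
    _ ≤ (√|lam| ^ (n - 1)) ^ n * |b| ^ n / n.factorial :=
        div_le_div_of_nonneg_left (by positivity) (by positivity)
          (by exact_mod_cast Nat.factorial_le_pow n)
    _ = |lam ^ (n * (n - 1) / 2) * b ^ n / n.factorial| := by
        rw [← hpow, abs_div, abs_mul, abs_pow, abs_pow, Nat.abs_cast]

theorem tendsto_rpow_inv_natCast_atTop_of_pow_le {a q : ℕ → ℝ} (hq : Tendsto q atTop atTop)
    (hle : ∀ᶠ n in atTop, q n ^ n ≤ a n) :
    Tendsto (fun n : ℕ => a n ^ (n : ℝ)⁻¹) atTop atTop := by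
  refine tendsto_atTop_mono' atTop ?_ hq
  filter_upwards [hle, hq.eventually_ge_atTop 0, eventually_ne_atTop 0] with n hn hq0 hn0
  calc q n = (q n ^ n) ^ (n : ℝ)⁻¹ := (Real.pow_rpow_inv_natCast hq0 hn0).symm
    _ ≤ a n ^ (n : ℝ)⁻¹ := Real.rpow_le_rpow (by positivity) hn (by positivity)

/-- If `a₀ + λᵏ b₀ ≠ 0` for all `k ≥ 0` and `x₀ ≠ 0`, then the coefficients
of the formal power series solution of the pantograph equation satisfy
`|xₙ|^(1/n) → ∞`; in particular the series has zero radius of convergence. -/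
theorem pantograph_zero_radius
    (lam a₀ b₀ x₀ : ℝ) (hlam : 1 < |lam|) (hb₀ : b₀ ≠ 0) (hx₀ : x₀ ≠ 0)
    (hnz : ∀ k : ℕ, a₀ + lam ^ k * b₀ ≠ 0)
    (x : ℕ → ℝ)
    (hx : ∀ n : ℕ, x n =
      (lam ^ (n * (n - 1) / 2) * b₀ ^ n / (n.factorial : ℝ)) *
        (x₀ * ∏ k ∈ Finset.range n, (1 + a₀ / (lam ^ k * b₀)))) :
    Tendsto (fun n : ℕ => |x n| ^ ((n : ℝ)⁻¹)) atTop atTop := by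
  have hlam0 : lam ≠ 0 := by rintro rfl; norm_num at hlam
  have hden (k : ℕ) : lam ^ k * b₀ ≠ 0 := mul_ne_zero (pow_ne_zero _ hlam0) hb₀
  obtain ⟨c, hc, hprod⟩ := exists_pos_eventually_le_norm_prod_range_one_add
    (f := fun k => a₀ / (lam ^ k * b₀))
    (fun k => by rw [one_add_div (hden k), add_comm]; exact div_ne_zero (hnz k) (hden k))
    (summable_abs_div_pow_mul hlam a₀ b₀)
  set c' := min (|x₀| * c) 1
  have hc' : 0 < c' := lt_min (by positivity) one_pos
  have hs : 1 < √|lam| := by rwa [Real.lt_sqrt zero_le_one, one_pow]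
  have hq : Tendsto (fun n : ℕ => √|lam| ^ (n - 1) / n * |b₀| * c') atTop atTop :=
    ((tendsto_pow_pred_div_natCast_atTop hs).atTop_mul_const (abs_pos.mpr hb₀)).atTop_mul_const
      hc'
  refine tendsto_rpow_inv_natCast_atTop_of_pow_le hq ?_
  filter_upwards [hprod, eventually_ne_atTop 0] with n hn hn0
  rw [hx n, abs_mul, mul_pow]
  refine mul_le_mul (sqrt_pow_pred_div_mul_pow_le_abs_div_factorial lam b₀ n) ?_ (by positivity)
    (abs_nonneg _)
  calc c' ^ n ≤ |x₀| * c :=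
        (pow_le_of_le_one hc'.le (min_le_right _ _) hn0).trans (min_le_left _ _)
    _ ≤ |x₀ * ∏ k ∈ range n, (1 + a₀ / (lam ^ k * b₀))| := by
        rw [abs_mul]; exact mul_le_mul_of_nonneg_left hn (abs_nonneg x₀)
end

section
/- Let λ be a real number with |λ| > 1, let β₀ ≠ 0, C > 0, μ > 0, and define θₖ = k!/(λ^{k(k+1)/2} β₀ᵏ). Fix δ with |λ|⁻¹ < δ < 1. Then there exists a constant K₂ ≥ 1, independent of n and k, such that |θₙ μⁿ / (θₖ μᵏ)| ≤ K₂ δⁿ / 2^{n-k} for all integers 0 ≤ k ≤ n-1. -/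
/-!
Writing `gₖ = θₖ μᵏ`, the step ratio `|g_{j+1} / g_j| = μ (j+1) / (|β₀| |λ|^{j+1})` factors as
`F j · δ^{j+1}` with `F j = μ (j+1) / (|β₀| (|λ| δ)^{j+1}) → 0`, since `|λ| δ > 1`. Telescoping,
`|gₙ / gₖ|` is the product of these factors over `k ≤ j < n`. The `δ`-part is at most `δⁿ`, its last
factor. Beyond some index `F j ≤ 1/2`, so the product of the `F j` is at most `K / 2^{n-k}`, where `K`
absorbs the finitely many early factors.
-/

open Filter Finset Topology
open scoped Nat

lemma succ_mul_succ_add_one_div_two (k : ℕ) :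
    (k + 1) * (k + 1 + 1) / 2 = k * (k + 1) / 2 + (k + 1) := by
  rw [show (k + 1) * (k + 1 + 1) = k * (k + 1) + 2 * (k + 1) by ring,
    Nat.add_mul_div_left _ _ two_pos]

lemma prod_Ico_div_of_ne_zero {G : Type*} [CommGroupWithZero G] {g : ℕ → G} (hg : ∀ j, g j ≠ 0)
    {k n : ℕ} (hkn : k ≤ n) : ∏ j ∈ Ico k n, g (j + 1) / g j = g n / g k := by
  have := congrArg Units.val (prod_Ico_div (f := fun j => Units.mk0 (g j) (hg j)) hkn)
  simpa using this

lemma prod_Ico_pow_succ_le {δ : ℝ} (h0 : 0 ≤ δ) (h1 : δ ≤ 1) {k n : ℕ} (hkn : k < n) :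
    ∏ j ∈ Ico k n, δ ^ (j + 1) ≤ δ ^ n := by
  obtain ⟨m, rfl⟩ := Nat.exists_eq_add_one_of_ne_zero (Nat.ne_zero_of_lt hkn)
  rw [prod_Ico_succ_top (Nat.le_of_lt_succ hkn)]
  exact mul_le_of_le_one_left (by positivity) (prod_le_one (fun _ _ => by positivity)
    fun _ _ => pow_le_one₀ h0 h1)

lemma exists_prod_le_div_two_pow_card {f : ℕ → ℝ} (hf0 : ∀ j, 0 ≤ f j)
    (hf : ∀ᶠ j in atTop, f j ≤ 1 / 2) :
    ∃ K : ℝ, 1 ≤ K ∧ ∀ s : Finset ℕ, ∏ j ∈ s, f j ≤ K / 2 ^ #s := by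
  obtain ⟨q, hq⟩ := eventually_atTop.mp hf
  set m : ℕ → ℝ := fun j => max 1 (2 * f j)
  have hm1 : ∀ j, 1 ≤ m j := fun j => le_max_left _ _
  refine ⟨∏ j ∈ range q, m j, one_le_prod fun j _ => hm1 j, fun s => ?_⟩
  rw [le_div_iff₀ (by positivity), mul_comm, ← prod_const, ← prod_mul_distrib]
  calc ∏ j ∈ s, 2 * f j
      ≤ ∏ j ∈ s, m j := prod_le_prod (fun j _ => by linarith [hf0 j]) fun j _ => le_max_right _ _
    _ ≤ ∏ j ∈ s ∪ range q, m j :=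
        prod_le_prod_of_subset_of_one_le subset_union_left (fun j _ => by linarith [hm1 j])
          fun j _ _ => hm1 j
    _ = ∏ j ∈ range q, m j := by
      refine (prod_subset subset_union_right fun j _ hj => ?_).symm
      have := hq j (by simpa using hj)
      exact max_eq_left (by linarith)

noncomputable def theta (lam β₀ : ℝ) (k : ℕ) : ℝ := k ! / (lam ^ (k * (k + 1) / 2) * β₀ ^ k)

section theta

variable {lam β₀ : ℝ}

lemma theta_ne_zero (hlam : lam ≠ 0) (hβ₀ : β₀ ≠ 0) (k : ℕ) : theta lam β₀ k ≠ 0 := by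
  unfold theta
  have := k.factorial_ne_zero
  positivity

lemma theta_succ_div_theta (hlam : lam ≠ 0) (hβ₀ : β₀ ≠ 0) (k : ℕ) :
    theta lam β₀ (k + 1) / theta lam β₀ k = (k + 1) / (lam ^ (k + 1) * β₀) := by
  have := k.factorial_ne_zero
  simp only [theta, succ_mul_succ_add_one_div_two, Nat.factorial_succ, pow_add, pow_succ]
  push_cast
  field_simp

lemma abs_theta_mul_pow_succ_div (hlam : lam ≠ 0) (hβ₀ : β₀ ≠ 0) {μ : ℝ} (hμ : 0 < μ) (k : ℕ) :
    |theta lam β₀ (k + 1) * μ ^ (k + 1) / (theta lam β₀ k * μ ^ k)| =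
      μ / |β₀| * ((k + 1) / |lam| ^ (k + 1)) := by
  rw [mul_div_mul_comm, theta_succ_div_theta hlam hβ₀, pow_succ μ k,
    mul_div_cancel_left₀ _ (pow_ne_zero k hμ.ne'), abs_mul, abs_div, abs_mul, abs_pow,
    abs_of_pos hμ, abs_of_nonneg (by positivity : (0 : ℝ) ≤ k + 1)]
  ring

end theta

lemma tendsto_succ_div_pow_succ {r : ℝ} (hr : 1 < r) :
    Tendsto (fun k : ℕ => ((k : ℝ) + 1) / r ^ (k + 1)) atTop (𝓝 0) := by
  have := (tendsto_add_atTop_iff_nat 1).mpr (tendsto_pow_const_div_const_pow_of_one_lt 1 hr)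
  simpa using this

theorem theta_ratio_bound_general
    (lam β₀ μ δ : ℝ) (hlam : 1 < |lam|) (hβ₀ : β₀ ≠ 0) (hμ : 0 < μ)
    (hδ₁ : |lam|⁻¹ < δ) (hδ₂ : δ < 1)
    (θ : ℕ → ℝ)
    (hθ : ∀ k : ℕ, θ k = (k.factorial : ℝ) / (lam ^ (k * (k + 1) / 2) * β₀ ^ k)) :
    ∃ K₂ : ℝ, 1 ≤ K₂ ∧ ∀ n k : ℕ, k < n →
      |θ n * μ ^ n / (θ k * μ ^ k)| ≤ K₂ * δ ^ n / 2 ^ (n - k) := by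
  obtain rfl : θ = theta lam β₀ := funext hθ
  have hlam0 : lam ≠ 0 := abs_pos.mp (one_pos.trans hlam)
  have hδ0 : 0 < δ := (inv_pos.mpr (one_pos.trans hlam)).trans hδ₁
  have hlamδ : 1 < |lam| * δ := by
    rw [inv_lt_iff_one_lt_mul₀ (one_pos.trans hlam)] at hδ₁; linarith
  set F : ℕ → ℝ := fun k => μ / |β₀| * ((k + 1) / (|lam| * δ) ^ (k + 1))
  have hF : Tendsto F atTop (𝓝 0) := by
    simpa using (tendsto_succ_div_pow_succ hlamδ).const_mul (μ / |β₀|)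
  obtain ⟨K, hK1, hK⟩ := exists_prod_le_div_two_pow_card (f := F) (fun k => by positivity)
    (hF.eventually (ge_mem_nhds one_half_pos))
  refine ⟨K, hK1, fun n k hkn => ?_⟩
  have hg : ∀ j, theta lam β₀ j * μ ^ j ≠ 0 := fun j =>
    mul_ne_zero (theta_ne_zero hlam0 hβ₀ j) (pow_ne_zero j hμ.ne')
  calc |theta lam β₀ n * μ ^ n / (theta lam β₀ k * μ ^ k)|
      = ∏ j ∈ Ico k n, F j * δ ^ (j + 1) := by
        rw [← prod_Ico_div_of_ne_zero hg hkn.le, abs_prod]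
        refine prod_congr rfl fun j _ => ?_
        rw [abs_theta_mul_pow_succ_div hlam0 hβ₀ hμ]
        simp only [F, mul_pow]
        field_simp
    _ = (∏ j ∈ Ico k n, F j) * ∏ j ∈ Ico k n, δ ^ (j + 1) := prod_mul_distrib
    _ ≤ K / 2 ^ (n - k) * δ ^ n := by
        rw [← Nat.card_Ico k n]
        gcongr
        · exact hK _
        · exact prod_Ico_pow_succ_le hδ0.le hδ₂.le hkn
    _ = K * δ ^ n / 2 ^ (n - k) := by ring

/-- With `θₖ = k!/(λ^{k(k+1)/2} β₀ᵏ)`, `|λ| > 1`, `β₀ ≠ 0`, `μ > 0`, and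
`|λ|⁻¹ < δ < 1`, there is `K₂ ≥ 1` with
`|θₙ μⁿ/(θₖ μᵏ)| ≤ K₂ δⁿ / 2^{n-k}` for all `0 ≤ k ≤ n-1`. -/
theorem theta_ratio_bound
    (lam β₀ C μ δ : ℝ) (hlam : 1 < |lam|) (hβ₀ : β₀ ≠ 0) (hC : 0 < C) (hμ : 0 < μ)
    (hδ₁ : |lam|⁻¹ < δ) (hδ₂ : δ < 1)
    (θ : ℕ → ℝ)
    (hθ : ∀ k : ℕ, θ k = (k.factorial : ℝ) / (lam ^ (k * (k + 1) / 2) * β₀ ^ k)) :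
    ∃ K₂ : ℝ, 1 ≤ K₂ ∧ ∀ n k : ℕ, k < n →
      |θ n * μ ^ n / (θ k * μ ^ k)| ≤ K₂ * δ ^ n / 2 ^ (n - k) :=
  theta_ratio_bound_general lam β₀ μ δ hlam hβ₀ hμ hδ₁ hδ₂ θ hθ
end

section
/- Let r, ρ : ℝ → ℝ be continuous, strictly positive, 2π-periodic functions, and let X be the Banach space of continuous 2π-periodic real functions with the supremum norm. Define L : X → X by (Lx)(t) = ∫_{t-r(t)}^{t} ρ(s)x(s) ds. Then L is a compact linear operator, and its spectral radius satisfies min_{t∈ℝ} ∫_{t-r(t)}^t ρ(s)ds ≤ rad(L) ≤ max_{t∈ℝ} ∫_{t-r(t)}^t ρ(s)ds; in particular rad(L) > 0. -/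
/-!
Everything rests on positivity: `L` maps nonnegative functions to nonnegative functions and
`(L 1)(t) = ∫_{t-r(t)}^t ρ`, so `K ≤ L 1 ≤ M` for the minimum `K` and maximum `M` of that integral.
Positivity gives `‖L‖ = ‖L 1‖ ≤ M`, hence the upper bound.

Since `spectralRadius ℝ` only sees the real spectrum, the lower bound needs a real spectral value
`k ≥ K`. If there were none, the resolvent `R(μ) = (μ - L)⁻¹` would be positive on all of
`[K, ∞)`: for `μ > ‖L‖` by the Neumann series, and downwards from any `c` by
`R(μ) = (1 - (c - μ) R(c))⁻¹ R(c)`, with continuity of `R` closing the induction. Then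
`w = R(K) 1 ≥ 0` solves `K w - L w = 1`, while `L w ≥ K · min w`, which fails where `w` is
minimal.

Compactness is Arzelà–Ascoli: `Lx` for `‖x‖ ≤ 1` share the modulus of continuity
`|∫_{t₀-r(t₀)}^{t-r(t)} ρ| + |∫_{t₀}^t ρ|`.
-/

open Real intervalIntegral
open Filter Topology
open MeasureTheory (volume)

theorem continuousOn_resolvent {𝕜 A : Type*} [NontriviallyNormedField 𝕜] [NormedRing A]
    [NormedAlgebra 𝕜 A] [CompleteSpace A] (a : A) :
    ContinuousOn (resolvent a) (resolventSet 𝕜 a) := fun _ hk =>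
  (spectrum.hasDerivAt_resolvent_const_left hk).continuousAt.continuousWithinAt

theorem ContinuousMap.isCompact_closure_range_of_equicontinuous {α E ι : Type*}
    [TopologicalSpace α] [CompactSpace α] [NormedAddCommGroup E] [ProperSpace E]
    {F : ι → C(α, E)} {C : ℝ} (hC : ∀ i, ‖F i‖ ≤ C) (hF : Equicontinuous fun i => ⇑(F i)) :
    IsCompact (closure (Set.range F)) := by
  let e := ContinuousMap.isometryEquivBoundedOfCompact α E
  have hbound : ∀ f x, f ∈ Set.range (e ∘ F) → f x ∈ Metric.closedBall (0 : E) C := by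
    rintro _ x ⟨i, rfl⟩
    rw [mem_closedBall_zero_iff]
    exact ((F i).norm_coe_le_norm x).trans (hC i)
  have hequi : Equicontinuous ((↑) : Set.range (e ∘ F) → α → E) := fun x₀ U hU =>
    (hF x₀ U hU).mono fun _ hx ⟨_, i, hi⟩ => hi ▸ hx i
  have h := BoundedContinuousFunction.arzela_ascoli _ (isCompact_closedBall _ _) _ hbound hequi
  have := e.toHomeomorph.isCompact_preimage.2 h
  rwa [Homeomorph.preimage_closure, IsometryEquiv.coe_toHomeomorph, Set.range_comp,
    e.injective.preimage_image] at this

theorem Equicontinuous.of_comp_isOpenQuotientMap {ι X Y α : Type*} [TopologicalSpace X]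
    [TopologicalSpace Y] [UniformSpace α] {f : X → Y} (hf : IsOpenQuotientMap f)
    {F : ι → Y → α} (hF : Equicontinuous fun i => F i ∘ f) : Equicontinuous F := by
  intro y U hU
  obtain ⟨x, rfl⟩ := hf.surjective y
  rw [← hf.map_nhds_eq x, eventually_map]
  exact hF x U hU

theorem abs_integral_mul_le_of_abs_le {ρ g : ℝ → ℝ} {a b C : ℝ}
    (hρ : IntervalIntegrable ρ volume a b) (hρ0 : ∀ s, 0 ≤ ρ s)
    (hg : ∀ s, |g s| ≤ C) : |∫ s in a..b, ρ s * g s| ≤ C * |∫ s in a..b, ρ s| := by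
  have hC : 0 ≤ C := (abs_nonneg _).trans (hg 0)
  have := norm_integral_le_abs_of_norm_le (μ := volume) (f := fun s => ρ s * g s)
    (g := fun s => C * ρ s) (Eventually.of_forall fun s => ?_) (hρ.const_mul C)
  · rwa [integral_const_mul, abs_mul, abs_of_nonneg hC] at this
  · rw [Real.norm_eq_abs, abs_mul, abs_of_nonneg (hρ0 s), mul_comm]
    exact mul_le_mul_of_nonneg_right (hg s) (hρ0 s)

theorem abs_integral_mul_sub_integral_mul_le {ρ g : ℝ → ℝ} {C : ℝ} (hρ : Continuous ρ)
    (hρ0 : ∀ s, 0 ≤ ρ s) (hg : Continuous g) (hgC : ∀ s, |g s| ≤ C) (a b c d : ℝ) :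
    |(∫ s in a..b, ρ s * g s) - ∫ s in c..d, ρ s * g s| ≤
      C * (|∫ s in a..c, ρ s| + |∫ s in b..d, ρ s|) := by
  have hρg : ∀ a b, IntervalIntegrable (fun s => ρ s * g s) volume a b :=
    fun a b => (hρ.mul hg).intervalIntegrable a b
  rw [integral_interval_sub_interval_comm (hρg a b) (hρg c d) (hρg a c), mul_add]
  exact (abs_sub _ _).trans (add_le_add
    (abs_integral_mul_le_of_abs_le (hρ.intervalIntegrable a c) hρ0 hgC)
    (abs_integral_mul_le_of_abs_le (hρ.intervalIntegrable b d) hρ0 hgC))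

section PositiveOperators

variable {α : Type*} [TopologicalSpace α] [CompactSpace α] {L : C(α, ℝ) →L[ℝ] C(α, ℝ)}

theorem isClosed_setOf_monotone :
    IsClosed {T : C(α, ℝ) →L[ℝ] C(α, ℝ) | Monotone T} := by
  simp only [Monotone, ContinuousMap.le_def, Set.ofPred_forall]
  refine isClosed_iInter fun x => isClosed_iInter fun y => isClosed_iInter fun _ =>
    isClosed_iInter fun p => isClosed_le ?_ ?_ <;>
  exact (continuous_eval_const p).comp (ContinuousLinearMap.apply ℝ _ _).continuous

theorem monotone_ringInverse_one_sub {T : C(α, ℝ) →L[ℝ] C(α, ℝ)} (hT : Monotone T)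
    (h : ‖T‖ < 1) : Monotone ⇑(Ring.inverse (1 - T)) := by
  rw [NormedRing.inverse_one_sub T h]
  refine isClosed_setOf_monotone.mem_of_tendsto
    (summable_geometric_of_norm_lt_one h).hasSum.tendsto_sum_nat (Eventually.of_forall fun n => ?_)
  intro x y hxy
  simp only [sum_apply, FunLike.coe_pow_eq_iterate]
  exact Finset.sum_le_sum fun i _ => hT.iterate i hxy

theorem monotone_resolvent_of_norm_lt (hL : Monotone L) {μ : ℝ} (h : ‖L‖ < μ) :
    Monotone ⇑(resolvent L μ) := by
  have hμ : 0 < μ := (norm_nonneg L).trans_lt h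
  have hres : resolvent L μ = μ⁻¹ • Ring.inverse (1 - μ⁻¹ • L) := by
    rw [eq_inv_smul_iff₀ hμ.ne']
    simpa [resolvent, Units.smul_def] using
      spectrum.units_smul_resolvent_self (r := Units.mk0 μ hμ.ne') (a := L)
  have hnorm : ‖μ⁻¹ • L‖ < 1 := by
    refine (ContinuousLinearMap.opNorm_smul_le _ _).trans_lt ?_
    rw [Real.norm_of_nonneg (inv_nonneg.2 hμ.le), inv_mul_lt_one₀ hμ]
    exact h
  rw [hres]
  exact (monotone_ringInverse_one_sub (hL.const_smul (inv_nonneg.2 hμ.le)) hnorm).const_smul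
    (inv_nonneg.2 hμ.le)

theorem monotone_resolvent_of_sub_mul_norm_lt {c μ : ℝ} (hc : c ∈ resolventSet ℝ L)
    (hRc : Monotone ⇑(resolvent L c)) (hμc : μ ≤ c) (hsmall : (c - μ) * ‖resolvent L c‖ < 1) :
    Monotone ⇑(resolvent L μ) := by
  set A := algebraMap ℝ (C(α, ℝ) →L[ℝ] C(α, ℝ)) c - L with hA
  set T := algebraMap ℝ (C(α, ℝ) →L[ℝ] C(α, ℝ)) (c - μ) * resolvent L c with hT
  have hAR : A * resolvent L c = 1 := Ring.mul_inverse_cancel _ hc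
  have hRA : resolvent L c * A = 1 := Ring.inverse_mul_cancel _ hc
  have hsplit : algebraMap ℝ _ μ - L = A * (1 - T) := by
    rw [mul_sub, mul_one, Algebra.left_comm, hAR, mul_one, map_sub, hA]
    abel
  have hcomm : Commute A (1 - T) := (Commute.one_right A).sub_right
    ((Algebra.commute_algebraMap_right _ A).mul_right (hAR.trans hRA.symm))
  have hres : resolvent L μ = Ring.inverse (1 - T) * resolvent L c := by
    rw [resolvent, hsplit, Ring.mul_inverse_rev' hcomm]
    rfl
  have hnorm : ‖T‖ < 1 := by
    rw [hT, ← Algebra.smul_def]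
    refine (ContinuousLinearMap.opNorm_smul_le _ _).trans_lt ?_
    rwa [Real.norm_of_nonneg (sub_nonneg.2 hμc)]
  have hTmono : Monotone ⇑T := by
    rw [hT, ← Algebra.smul_def]
    exact hRc.const_smul (sub_nonneg.2 hμc)
  rw [hres]
  exact (monotone_ringInverse_one_sub hTmono hnorm).comp hRc

theorem monotone_resolvent_of_Ici_subset (hL : Monotone L) {K : ℝ}
    (hK : Set.Ici K ⊆ resolventSet ℝ L) {μ : ℝ} (hμ : K ≤ μ) : Monotone ⇑(resolvent L μ) := by
  rcases lt_or_ge ‖L‖ μ with hLμ | hμL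
  · exact monotone_resolvent_of_norm_lt hL hLμ
  have hcont : ContinuousOn (resolvent L) (Set.Icc K (‖L‖ + 1)) :=
    (continuousOn_resolvent (𝕜 := ℝ) L).mono fun c hc => hK hc.1
  have hclosed : IsClosed ({μ | Monotone ⇑(resolvent L μ)} ∩ Set.Icc K (‖L‖ + 1)) := by
    rw [Set.inter_comm]
    exact hcont.preimage_isClosed_of_isClosed isClosed_Icc isClosed_setOf_monotone
  refine hclosed.Icc_subset_of_forall_exists_lt (monotone_resolvent_of_norm_lt hL (lt_add_one _))
    (fun c hc y hy => ?_) ⟨hμ, hμL.trans (le_add_of_nonneg_right zero_le_one)⟩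
  have hsmall : ∀ᶠ μ in 𝓝 c, (c - μ) * ‖resolvent L c‖ < 1 := by
    have : Tendsto (fun μ => (c - μ) * ‖resolvent L c‖) (𝓝 c) (𝓝 0) :=
      Continuous.tendsto' (by fun_prop) c 0 (by simp)
    exact this.eventually (gt_mem_nhds one_pos)
  have hnear : ∀ᶠ μ in 𝓝[<] c, Monotone ⇑(resolvent L μ) := by
    filter_upwards [nhdsWithin_le_nhds hsmall, self_mem_nhdsWithin] with μ hμ hμc
    exact monotone_resolvent_of_sub_mul_norm_lt (hK hc.2.1.le) hc.1 hμc.le hμ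
  exact (hnear.and (Ico_mem_nhdsLT hy)).exists

theorem exists_mem_spectrum_ge [Nonempty α] (hL : Monotone L) {K : ℝ} (hK : ∀ p, K ≤ L 1 p) :
    ∃ k ∈ spectrum ℝ L, K ≤ k := by
  by_contra! h
  have hres : Set.Ici K ⊆ resolventSet ℝ L := fun μ hμ =>
    spectrum.notMem_iff.1 fun hμs => (h μ hμs).not_ge hμ
  set w := resolvent L K 1
  have hw : K • w - L w = 1 := by
    have := congrArg (· 1) (Ring.mul_inverse_cancel _ (hres (Set.mem_Ici.2 le_rfl)))
    simpa [Algebra.algebraMap_eq_smul_one, w, resolvent] using this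
  have hw0 : 0 ≤ w := by
    simpa using monotone_resolvent_of_Ici_subset hL hres le_rfl (zero_le_one' C(α, ℝ))
  obtain ⟨p, -, hp⟩ := isCompact_univ.exists_isMinOn Set.univ_nonempty w.continuous.continuousOn
  have hLw : w p * K ≤ L w p :=
    calc w p * K ≤ w p * L 1 p := mul_le_mul_of_nonneg_left (hK p) (hw0 p)
      _ = L (w p • 1) p := by simp
      _ ≤ L w p := hL (fun q => by simpa using hp (Set.mem_univ q)) p
  have hwp : K * w p - L w p = 1 := by simpa using congrArg (· p) hw
  linarith

theorem norm_le_norm_apply_one (hL : Monotone L) : ‖L‖ ≤ ‖L 1‖ := by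
  refine L.opNorm_le_bound (norm_nonneg _) fun x => ?_
  have hx : ∀ q, |x q| ≤ ‖x‖ := fun q => by simpa using x.norm_coe_le_norm q
  have hlow : L (-(‖x‖ • 1)) ≤ L x := hL <| ContinuousMap.le_def.2 fun q => by
    simpa using (abs_le.1 (hx q)).1
  have hup : L x ≤ L (‖x‖ • 1) := hL <| ContinuousMap.le_def.2 fun q => by
    simpa using (abs_le.1 (hx q)).2
  rw [ContinuousMap.norm_le _ (by positivity)]
  intro p
  have hp := (le_abs_self (L 1 p)).trans (by simpa using (L 1).norm_coe_le_norm p)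
  have hlow' : -(‖x‖ * L 1 p) ≤ L x p := by simpa using ContinuousMap.le_def.1 hlow p
  have hup' : L x p ≤ ‖x‖ * L 1 p := by simpa using ContinuousMap.le_def.1 hup p
  rw [Real.norm_eq_abs, abs_le]
  constructor <;> nlinarith [norm_nonneg x]

theorem ofReal_sInf_range_le_spectralRadius [Nonempty α] (hL : Monotone L) :
    ENNReal.ofReal (sInf (Set.range (L 1))) ≤ spectralRadius ℝ L := by
  obtain ⟨k, hk, hKk⟩ := exists_mem_spectrum_ge hL fun p =>
    csInf_le (isCompact_range (L 1).continuous).bddBelow ⟨p, rfl⟩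
  calc ENNReal.ofReal (sInf (Set.range (L 1))) ≤ ‖k‖₊ := by
        rw [← ENNReal.ofReal_coe_nnreal, coe_nnnorm]
        exact ENNReal.ofReal_le_ofReal (hKk.trans (le_abs_self k))
    _ ≤ spectralRadius ℝ L :=
        le_iSup₂ (f := fun k (_ : k ∈ spectrum ℝ L) => (‖k‖₊ : ENNReal)) k hk

theorem spectralRadius_le_ofReal_sSup_range [Nonempty α] (hL : Monotone L) :
    spectralRadius ℝ L ≤ ENNReal.ofReal (sSup (Set.range (L 1))) := by
  have hL1 : 0 ≤ L 1 := by simpa using hL (zero_le_one' C(α, ℝ))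
  have hbdd := (isCompact_range (L 1).continuous).bddAbove
  have hnorm : ‖L 1‖ ≤ sSup (Set.range (L 1)) := by
    have hp := Classical.arbitrary α
    rw [ContinuousMap.norm_le _ ((hL1 hp).trans (le_csSup hbdd ⟨hp, rfl⟩))]
    exact fun p => (Real.norm_of_nonneg (hL1 p)).trans_le (le_csSup hbdd ⟨p, rfl⟩)
  calc spectralRadius ℝ L ≤ ‖L‖₊ := spectrum.spectralRadius_le_nnnorm (𝕜 := ℝ) L
    _ ≤ ENNReal.ofReal (sSup (Set.range (L 1))) := by
        rw [← ENNReal.ofReal_coe_nnreal, coe_nnnorm]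
        exact ENNReal.ofReal_le_ofReal ((norm_le_norm_apply_one hL).trans hnorm)

end PositiveOperators

section DelayOperator

variable {T : ℝ} {r ρ : ℝ → ℝ} {L : C(AddCircle T, ℝ) →L[ℝ] C(AddCircle T, ℝ)}

theorem monotone_of_apply_eq_integral (hρ : Continuous ρ) (hr0 : ∀ t, 0 ≤ r t)
    (hρ0 : ∀ t, 0 ≤ ρ t)
    (hL : ∀ x (t : ℝ), L x t = ∫ s in (t - r t)..t, ρ s * x s) : Monotone L := by
  intro x y hxy
  refine ContinuousMap.le_def.2 fun p => ?_
  obtain ⟨t, rfl⟩ := QuotientAddGroup.mk_surjective p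
  rw [hL, hL]
  refine integral_mono_on (sub_le_self _ (hr0 t)) ?_ ?_ fun s _ =>
    mul_le_mul_of_nonneg_left (ContinuousMap.le_def.1 hxy s) (hρ0 s)
  all_goals exact (hρ.mul ((ContinuousMap.continuous _).comp
    (AddCircle.continuous_mk' T))).intervalIntegrable _ _

theorem isCompactOperator_of_apply_eq_integral [Fact (0 < T)] (hr : Continuous r)
    (hρ : Continuous ρ) (hρ0 : ∀ t, 0 ≤ ρ t)
    (hL : ∀ x (t : ℝ), L x t = ∫ s in (t - r t)..t, ρ s * x s) : IsCompactOperator L := by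
  rw [← L.coe_coe, isCompactOperator_iff_isCompact_closure_image_closedBall
    (L : C(AddCircle T, ℝ) →ₗ[ℝ] C(AddCircle T, ℝ)) one_pos, Set.image_eq_range]
  refine ContinuousMap.isCompact_closure_range_of_equicontinuous (C := ‖L‖)
    (fun x => by simpa using L.le_opNorm_of_le (mem_closedBall_zero_iff.1 x.2)) ?_
  refine Equicontinuous.of_comp_isOpenQuotientMap QuotientAddGroup.isOpenQuotientMap_mk
    fun t₀ => ?_
  have hprim := continuous_primitive fun a b => hρ.intervalIntegrable (μ := volume) a b
  refine Metric.equicontinuousAt_of_continuity_modulus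
    (fun t => |∫ s in (t₀ - r t₀)..(t - r t), ρ s| + |∫ s in t₀..t, ρ s|) ?_ _
    (Eventually.of_forall fun t x => ?_)
  · refine Continuous.tendsto' ?_ t₀ 0 (by simp)
    exact ((hprim _).comp (continuous_id.sub hr)).abs.add (hprim _).abs
  · rw [Function.comp_apply, Function.comp_apply, ContinuousLinearMap.coe_coe, hL, hL,
      Real.dist_eq, ← one_mul (_ + _)]
    refine abs_integral_mul_sub_integral_mul_le hρ hρ0 ((ContinuousMap.continuous _).comp
      (AddCircle.continuous_mk' T)) (fun s => ?_) _ _ _ _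
    simpa using ((x : C(AddCircle T, ℝ)).norm_coe_le_norm s).trans
      (mem_closedBall_zero_iff.1 x.2)

end DelayOperator

theorem delay_integral_operator_compact_spectral_radius_general
    [Fact (0 < 2 * Real.pi)]
    (r ρ : ℝ → ℝ) (hr : Continuous r) (hρ : Continuous ρ)
    (hrpos : ∀ t, 0 < r t) (hρpos : ∀ t, 0 < ρ t)
    (L : C(AddCircle (2 * Real.pi), ℝ) →L[ℝ] C(AddCircle (2 * Real.pi), ℝ))
    (hL : ∀ (x : C(AddCircle (2 * Real.pi), ℝ)) (t : ℝ),
      (L x) (t : AddCircle (2 * Real.pi)) =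
        ∫ s in (t - r t)..t, ρ s * x (s : AddCircle (2 * Real.pi))) :
    IsCompactOperator (⇑L) ∧
      ENNReal.ofReal (sInf (Set.range fun t : ℝ => ∫ s in (t - r t)..t, ρ s)) ≤
        spectralRadius ℝ L ∧
      spectralRadius ℝ L ≤
        ENNReal.ofReal (sSup (Set.range fun t : ℝ => ∫ s in (t - r t)..t, ρ s)) ∧
      0 < spectralRadius ℝ L := by
  have hmono : Monotone L :=
    monotone_of_apply_eq_integral hρ (fun t => (hrpos t).le) (fun t => (hρpos t).le) hL
  have hrange : Set.range (fun t : ℝ => ∫ s in (t - r t)..t, ρ s) = Set.range (L 1) := by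
    rw [← QuotientAddGroup.mk_surjective.range_comp]
    congr 1
    ext t
    simp [hL]
  have hmin : 0 < sInf (Set.range (L 1)) := by
    obtain ⟨p, hp⟩ := (isCompact_range (L 1).continuous).sInf_mem (Set.range_nonempty _)
    obtain ⟨t, rfl⟩ := QuotientAddGroup.mk_surjective p
    rw [← hp, hL]
    simpa using intervalIntegral_pos_of_pos (hρ.intervalIntegrable _ _) hρpos
      (sub_lt_self _ (hrpos t))
  have hlow := ofReal_sInf_range_le_spectralRadius hmono
  rw [hrange]
  exact ⟨isCompactOperator_of_apply_eq_integral hr hρ (fun t => (hρpos t).le) hL, hlow,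
    spectralRadius_le_ofReal_sSup_range hmono, (ENNReal.ofReal_pos.2 hmin).trans_le hlow⟩

/-- For continuous, strictly positive, `2π`-periodic `r, ρ`, the integral
operator `(Lx)(t) = ∫_{t-r(t)}^t ρ(s)x(s) ds` on the Banach space of continuous
`2π`-periodic functions is a compact linear operator, and its spectral radius satisfies
`min_t ∫_{t-r(t)}^t ρ ≤ rad(L) ≤ max_t ∫_{t-r(t)}^t ρ`; in particular `rad(L) > 0`. -/
theorem delay_integral_operator_compact_spectral_radius
    [Fact (0 < 2 * Real.pi)]
    (r ρ : ℝ → ℝ) (hr : Continuous r) (hρ : Continuous ρ)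
    (hrpos : ∀ t, 0 < r t) (hρpos : ∀ t, 0 < ρ t)
    (hrper : ∀ t, r (t + 2 * Real.pi) = r t) (hρper : ∀ t, ρ (t + 2 * Real.pi) = ρ t)
    (L : C(AddCircle (2 * Real.pi), ℝ) →L[ℝ] C(AddCircle (2 * Real.pi), ℝ))
    (hL : ∀ (x : C(AddCircle (2 * Real.pi), ℝ)) (t : ℝ),
      (L x) (t : AddCircle (2 * Real.pi)) =
        ∫ s in (t - r t)..t, ρ s * x (s : AddCircle (2 * Real.pi))) :
    IsCompactOperator (⇑L) ∧
      ENNReal.ofReal (sInf (Set.range fun t : ℝ => ∫ s in (t - r t)..t, ρ s)) ≤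
        spectralRadius ℝ L ∧
      spectralRadius ℝ L ≤
        ENNReal.ofReal (sSup (Set.range fun t : ℝ => ∫ s in (t - r t)..t, ρ s)) ∧
      0 < spectralRadius ℝ L :=
  delay_integral_operator_compact_spectral_radius_general r ρ hr hρ hrpos hρpos L hL
end

section
/- Let λ > 3 and let n, m be integers with 3 < λ < 2πm + 1 and √((λ−1)² − 4) < 2πn < λ − 1. Define η(t) = t + (λ−1)sin t − 2πn and t₀₀ = π/2 + arccos(2πn/(λ−1)). Then η(t₀₀) = t₀₀ and |η'(t₀₀)| < 1. -/
/-!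
Writing `a = λ - 1`, `c = 2πn` and `t₀₀ = π/2 + arccos (c / a)`, one has `sin t₀₀ = c / a`, so
`η t₀₀ = t₀₀`, and `a cos t₀₀ = -√(a² - c²)`, so `η' t₀₀ = 1 - √(a² - c²)`. The hypotheses on `n`
say exactly that `0 < a² - c² < 4`, i.e. `0 < √(a² - c²) < 2`.
-/

open Real

lemma Real.sin_pi_div_two_add_arccos {x : ℝ} (hx₁ : -1 ≤ x) (hx₂ : x ≤ 1) :
    sin (π / 2 + arccos x) = x := by
  rw [add_comm, sin_add_pi_div_two, cos_arccos hx₁ hx₂]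

lemma Real.mul_cos_pi_div_two_add_arccos_div {a : ℝ} (ha : 0 < a) (c : ℝ) :
    a * cos (π / 2 + arccos (c / a)) = -√(a ^ 2 - c ^ 2) := by
  have ha2 : a ^ 2 - c ^ 2 = a ^ 2 * (1 - (c / a) ^ 2) := by field_simp
  rw [add_comm, cos_add_pi_div_two, sin_arccos, ha2, sqrt_mul (sq_nonneg a), sqrt_sq ha.le,
    mul_neg]

lemma Real.hasDerivAt_add_mul_sin_sub (a c t : ℝ) :
    HasDerivAt (fun s ↦ s + a * sin s - c) (1 + a * cos t) t :=
  ((hasDerivAt_id t).add ((hasDerivAt_sin t).const_mul a)).sub_const c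

lemma abs_one_sub_sqrt_lt_one {x : ℝ} (hx₀ : 0 < x) (hx₄ : x < 4) : |1 - √x| < 1 := by
  have h₀ : 0 < √x := sqrt_pos.mpr hx₀
  have h₂ : √x < 2 := (sqrt_lt' two_pos).mpr (by norm_num [hx₄])
  rw [abs_lt]
  constructor <;> linarith

theorem contractive_fixed_point_exists_general
    (lam : ℝ) (n : ℕ)
    (hn₁ : Real.sqrt ((lam - 1) ^ 2 - 4) < 2 * Real.pi * n)
    (hn₂ : 2 * Real.pi * n < lam - 1)
    (η : ℝ → ℝ) (hη : ∀ t, η t = t + (lam - 1) * Real.sin t - 2 * Real.pi * n)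
    (t₀₀ : ℝ) (ht₀₀ : t₀₀ = Real.pi / 2 + Real.arccos (2 * Real.pi * n / (lam - 1))) :
    η t₀₀ = t₀₀ ∧ |deriv η t₀₀| < 1 := by
  set a := lam - 1
  set c := 2 * π * n
  have hc : 0 < c := (sqrt_nonneg _).trans_lt hn₁
  have ha : 0 < a := hc.trans hn₂
  have hca : c / a ≤ 1 := (div_le_one ha).mpr hn₂.le
  have hsin : sin t₀₀ = c / a :=
    ht₀₀ ▸ sin_pi_div_two_add_arccos (by linarith [div_pos hc ha]) hca
  have hderiv : deriv η t₀₀ = 1 - √(a ^ 2 - c ^ 2) := by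
    rw [funext hη, (hasDerivAt_add_mul_sin_sub a c t₀₀).deriv, ht₀₀,
      mul_cos_pi_div_two_add_arccos_div ha, ← sub_eq_add_neg]
  refine ⟨by rw [hη, hsin, mul_div_cancel₀ c ha.ne', add_sub_cancel_right], ?_⟩
  rw [hderiv]
  apply abs_one_sub_sqrt_lt_one
  · nlinarith
  · linarith [(sqrt_lt' hc).mp hn₁]

/-- For `3 < λ < 2πm + 1` and an integer `n` with
`√((λ−1)² − 4) < 2πn < λ − 1`, the map `η(t) = t + (λ−1)sin t − 2πn` has a contractive
fixed point at `t₀₀ = π/2 + arccos(2πn/(λ−1))`: `η(t₀₀) = t₀₀` and `|η'(t₀₀)| < 1`. -/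
theorem contractive_fixed_point_exists
    (lam : ℝ) (n m : ℕ)
    (hlam₁ : 3 < lam) (hlam₂ : lam < 2 * Real.pi * m + 1)
    (hn₁ : Real.sqrt ((lam - 1) ^ 2 - 4) < 2 * Real.pi * n)
    (hn₂ : 2 * Real.pi * n < lam - 1)
    (η : ℝ → ℝ) (hη : ∀ t, η t = t + (lam - 1) * Real.sin t - 2 * Real.pi * n)
    (t₀₀ : ℝ) (ht₀₀ : t₀₀ = Real.pi / 2 + Real.arccos (2 * Real.pi * n / (lam - 1))) :
    η t₀₀ = t₀₀ ∧ |deriv η t₀₀| < 1 :=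
  contractive_fixed_point_exists_general lam n hn₁ hn₂ η hη t₀₀ ht₀₀
end

section
/- Let K > 0 and λ > 2 be real, and define H₀(λ) = 1/λ and Hₙ(λ) = (2/λ)ⁿK for n ≥ 1. Suppose a real sequence (wₙ) satisfies |w_{n+1} − wₙ| ≤ Hₙ(λ)·max_{0≤k≤n}|wₖ| for all n ≥ 0. Then |wₙ| ≤ (∏_{k=0}^{∞}(1 + Hₖ(λ)))·|w₀| for every n, the limit w∞ = lim wₙ exists, and |w∞ − w₀| ≤ Ω(λ)|w₀| where Ω(λ) = (Σ_{n=0}^∞ Hₙ(λ))·(∏_{k=0}^∞(1 + Hₖ(λ))). In particular, if Ω(λ) < 1 and w₀ ≠ 0 then w∞ ≠ 0. -/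
/-!
Write `M n = max_{k ≤ n} ‖w k‖` (`partialSups`). The hypothesis gives `‖w (n+1)‖ ≤ (1 + H n) M n`, hence
`M (n+1) ≤ (1 + H n) M n` and `M n ≤ ∏_{k<n} (1 + H k) ‖w 0‖ ≤ ∏' k, (1 + H k) ‖w 0‖`, the
product converging because `Σ H` does. The increments are then dominated by the summable
sequence `H n ∏' k, (1 + H k) ‖w 0‖`, so `w` is Cauchy, and summing them bounds `‖w∞ - w 0‖`.
-/

open Filter Finset

lemma summable_of_eq_pow_mul {H : ℕ → ℝ} {r K : ℝ} (hr0 : 0 ≤ r) (hr1 : r < 1)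
    (hH : ∀ n, 1 ≤ n → H n = r ^ n * K) : Summable H := by
  rw [← summable_nat_add_iff 1]
  have hgeom : Summable (fun n => r ^ (n + 1) * K) :=
    (summable_nat_add_iff 1).2 ((summable_geometric_of_lt_one hr0 hr1).mul_right K)
  exact hgeom.congr fun n => (hH (n + 1) n.succ_pos).symm

lemma prod_le_tprod_of_one_le {ι : Type*} {f : ι → ℝ} (hf : Multipliable f)
    (h : ∀ i, 1 ≤ f i) (s : Finset ι) : ∏ i ∈ s, f i ≤ ∏' i, f i :=
  ge_of_tendsto hf.hasProd <| eventually_atTop.2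
    ⟨s, fun _ hst => prod_le_prod_of_subset_of_one_le hst
      (fun i _ => zero_le_one.trans (h i)) fun i _ _ => h i⟩

section RunningMax

variable {E : Type*} [SeminormedAddCommGroup E] {w : ℕ → E} {H : ℕ → ℝ}

lemma partialSups_norm_succ_le {n : ℕ} (hH : 0 ≤ H n)
    (hw : ‖w (n + 1) - w n‖ ≤ H n * partialSups (‖w ·‖) n) :
    partialSups (‖w ·‖) (n + 1) ≤ (1 + H n) * partialSups (‖w ·‖) n := by
  set M := partialSups (‖w ·‖) n
  have hM : 0 ≤ M := (norm_nonneg _).trans (le_partialSups_of_le (‖w ·‖) n.zero_le)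
  have hstep : ‖w (n + 1)‖ ≤ ‖w n‖ + ‖w (n + 1) - w n‖ := norm_le_norm_add_norm_sub' _ _
  have hwn : ‖w n‖ ≤ M := le_partialSups (‖w ·‖) n
  rw [← Order.succ_eq_add_one, partialSups_succ, Order.succ_eq_add_one]
  exact sup_le (le_mul_of_one_le_left hM (le_add_of_nonneg_right hH)) (by linarith)

variable (hH : ∀ n, 0 ≤ H n)
  (hw : ∀ n, ‖w (n + 1) - w n‖ ≤ H n * partialSups (‖w ·‖) n)
include hH hw

lemma partialSups_norm_le_prod_mul (n : ℕ) :
    partialSups (‖w ·‖) n ≤ (∏ k ∈ range n, (1 + H k)) * ‖w 0‖ := by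
  induction n with
  | zero => simp
  | succ n ih =>
    calc partialSups (‖w ·‖) (n + 1) ≤ (1 + H n) * partialSups (‖w ·‖) n :=
          partialSups_norm_succ_le (hH n) (hw n)
      _ ≤ (1 + H n) * ((∏ k ∈ range n, (1 + H k)) * ‖w 0‖) := by
          gcongr
          linarith [hH n]
      _ = (∏ k ∈ range (n + 1), (1 + H k)) * ‖w 0‖ := by rw [prod_range_succ]; ring

lemma partialSups_norm_le_tprod_mul (hs : Summable H) (n : ℕ) :
    partialSups (‖w ·‖) n ≤ (∏' k, (1 + H k)) * ‖w 0‖ :=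
  (partialSups_norm_le_prod_mul hH hw n).trans <| by
    gcongr
    exact prod_le_tprod_of_one_le (Real.multipliable_one_add_of_summable hs)
      (fun k => le_add_of_nonneg_right (hH k)) _

lemma exists_tendsto_norm_sub_le [CompleteSpace E] (hs : Summable H) :
    ∃ winf, Tendsto w atTop (nhds winf) ∧
      ‖winf - w 0‖ ≤ ((∑' n, H n) * ∏' k, (1 + H k)) * ‖w 0‖ := by
  set d := fun n => H n * ((∏' k, (1 + H k)) * ‖w 0‖)
  have hd : Summable d := hs.mul_right _
  have hdist : ∀ n, dist (w n) (w n.succ) ≤ d n := fun n => by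
    rw [dist_comm, dist_eq_norm]
    exact (hw n).trans
      (mul_le_mul_of_nonneg_left (partialSups_norm_le_tprod_mul hH hw hs n) (hH n))
  obtain ⟨winf, hlim⟩ := cauchySeq_tendsto_of_complete (cauchySeq_of_dist_le_of_summable d hdist hd)
  refine ⟨winf, hlim, ?_⟩
  calc ‖winf - w 0‖ = dist (w 0) winf := by rw [dist_comm, dist_eq_norm]
    _ ≤ ∑' n, d n := dist_le_tsum_of_dist_le_of_tendsto₀ d hdist hd hlim
    _ = ((∑' n, H n) * ∏' k, (1 + H k)) * ‖w 0‖ := by rw [tsum_mul_right, mul_assoc]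

end RunningMax

/-- With `H₀ = 1/λ`, `Hₙ = (2/λ)ⁿK` for `n ≥ 1`, `λ > 2`, `K > 0`, if
`|w_{n+1} − wₙ| ≤ Hₙ · max_{0≤k≤n}|wₖ|`, then `|wₙ| ≤ (∏_{k=0}^∞(1+Hₖ))|w₀|`, the limit
`w∞` exists, and `|w∞ − w₀| ≤ Ω|w₀|` with `Ω = (Σ Hₙ)(∏(1+Hₖ))`; in particular if
`Ω < 1` and `w₀ ≠ 0` then `w∞ ≠ 0`. -/
theorem w_infinity_estimate
    (K lam : ℝ) (hK : 0 < K) (hlam : 2 < lam)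
    (H : ℕ → ℝ) (hH0 : H 0 = 1 / lam) (hHn : ∀ n : ℕ, 1 ≤ n → H n = (2 / lam) ^ n * K)
    (w : ℕ → ℝ)
    (hw : ∀ n : ℕ, |w (n + 1) - w n| ≤
      H n * (Finset.range (n + 1)).sup' (by simp) (fun k => |w k|)) :
    (∀ n : ℕ, |w n| ≤ (∏' k : ℕ, (1 + H k)) * |w 0|) ∧
      ∃ winf : ℝ, Tendsto w atTop (nhds winf) ∧
        |winf - w 0| ≤ ((∑' n : ℕ, H n) * ∏' k : ℕ, (1 + H k)) * |w 0| ∧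
        (((∑' n : ℕ, H n) * ∏' k : ℕ, (1 + H k)) < 1 → w 0 ≠ 0 → winf ≠ 0) := by
  have hlam0 : 0 < lam := by linarith
  have hH : ∀ n, 0 ≤ H n := fun n => by
    rcases n.eq_zero_or_pos with rfl | hn
    · rw [hH0]; positivity
    · rw [hHn n hn]; positivity
  have hs : Summable H :=
    summable_of_eq_pow_mul (by positivity) ((div_lt_one hlam0).2 hlam) hHn
  have hw' : ∀ n, ‖w (n + 1) - w n‖ ≤ H n * partialSups (‖w ·‖) n := by
    simpa only [Real.norm_eq_abs, partialSups_eq_sup'_range] using hw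
  refine ⟨fun n => ?_, ?_⟩
  · simpa only [Real.norm_eq_abs] using
      (le_partialSups (‖w ·‖) n).trans (partialSups_norm_le_tprod_mul hH hw' hs n)
  obtain ⟨winf, hlim, hdist⟩ := exists_tendsto_norm_sub_le hH hw' hs
  simp only [Real.norm_eq_abs] at hdist
  refine ⟨winf, hlim, hdist, fun hΩ hw0 hzero => ?_⟩
  subst hzero
  rw [zero_sub, abs_neg] at hdist
  linarith [mul_lt_of_lt_one_left (abs_pos.2 hw0) hΩ]
end
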